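/- arXiv:2008.04812 — 7 statements merged into one kernel-verified Lean document; each statement's English description precedes it below -/
import Mathlib

section
/- Let n ≥ 2 be an integer. For all real x with −1/2 < x < 1/2, one has −4(Π_n(x)² − Π_{n,0}²)·Π_n(x)²·Σ_{n−1}(x)·Σ_{n−2}(x) + 8x²·Π_{n,0}²·Π_n(x)·Σ_{n−1}(x)²·Σ_{n−2}(x) ≥ 0. -/
open Finset

/-- `Π_n(x) = ∏_{k=1}^n (x² − (k−1/2)²)`. -/
noncomputable def PiN (n : ℕ) (x : ℝ) : ℝ :=
  ∏ k ∈ Finset.Icc 1 n, (x ^ 2 - ((k : ℝ) - 1 / 2) ^ 2)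

/-- `Π_{n,0} = ∏_{k=1}^n (k−1/2)²`. -/
noncomputable def PiN0 (n : ℕ) : ℝ :=
  ∏ k ∈ Finset.Icc 1 n, ((k : ℝ) - 1 / 2) ^ 2

/-- `Σ_i(x) = ∑_{P ⊆ {1,…,n}, |P| = i} ∏_{j ∈ P} (x² − (j−1/2)²)`, with `Σ_i = 0` for `i < 0`. -/
noncomputable def Sig (n : ℕ) (i : ℤ) (x : ℝ) : ℝ :=
  if 0 ≤ i then
    ∑ P ∈ (Finset.Icc 1 n).powersetCard i.toNat, ∏ j ∈ P, (x ^ 2 - ((j : ℝ) - 1 / 2) ^ 2)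
  else 0


/-- Product difference bound: ∏g - ∏f ≤ Σ_k (g k - f k)·∏_{j≠k} g j for 0 ≤ f ≤ g. -/
lemma aux_prod_sub_prod_le (s : Finset ℕ) (f g : ℕ → ℝ)
    (h0 : ∀ j ∈ s, 0 ≤ f j) (h1 : ∀ j ∈ s, f j ≤ g j) :
    ∏ j ∈ s, g j - ∏ j ∈ s, f j ≤ ∑ k ∈ s, (g k - f k) * ∏ j ∈ s.erase k, g j := by
  induction s using Finset.induction_on with
  | empty => simp
  | @insert a t ha ih =>
    have h0' : ∀ j ∈ t, 0 ≤ f j := fun j hj => h0 j (mem_insert_of_mem hj)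
    have h1' : ∀ j ∈ t, f j ≤ g j := fun j hj => h1 j (mem_insert_of_mem hj)
    have hfa : 0 ≤ f a := h0 a (mem_insert_self a t)
    have hga : f a ≤ g a := h1 a (mem_insert_self a t)
    have hga0 : 0 ≤ g a := hfa.trans hga
    have hgt0 : ∀ j ∈ t, 0 ≤ g j := fun j hj => (h0' j hj).trans (h1' j hj)
    have hPg : 0 ≤ ∏ j ∈ t, g j := Finset.prod_nonneg hgt0
    have hmono : ∏ j ∈ t, f j ≤ ∏ j ∈ t, g j := Finset.prod_le_prod h0' h1'
    rw [Finset.prod_insert ha, Finset.prod_insert ha, Finset.sum_insert ha,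
      Finset.erase_insert ha]
    have hrest : ∑ k ∈ t, (g k - f k) * ∏ j ∈ (insert a t).erase k, g j
        = g a * ∑ k ∈ t, (g k - f k) * ∏ j ∈ t.erase k, g j := by
      rw [Finset.mul_sum]
      refine Finset.sum_congr rfl fun k hk => ?_
      have hka : a ≠ k := fun h => ha (h ▸ hk)
      rw [Finset.erase_insert_of_ne (hka),
        Finset.prod_insert (fun h => ha (Finset.mem_of_mem_erase h))]
      ring
    rw [hrest]
    have hsum0 : ∏ j ∈ t, g j - ∏ j ∈ t, f j ≤ ∑ k ∈ t, (g k - f k) * ∏ j ∈ t.erase k, g j :=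
      ih h0' h1'
    nlinarith [mul_le_mul_of_nonneg_left hsum0 hga0,
      mul_le_mul_of_nonneg_right hga hPg,
      mul_le_mul_of_nonneg_left hmono hfa]

lemma aux_sig (n i : ℕ) (x : ℝ) :
    Sig n (i : ℤ) x
      = (-1:ℝ)^i * ∑ P ∈ (Finset.Icc 1 n).powersetCard i,
          ∏ j ∈ P, (((j:ℝ) - 1/2)^2 - x^2) := by
  simp only [Sig, if_pos (Int.natCast_nonneg i), Int.toNat_natCast]
  rw [Finset.mul_sum]
  refine Finset.sum_congr rfl fun P hP => ?_
  have hc : P.card = i := (Finset.mem_powersetCard.mp hP).2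
  calc ∏ j ∈ P, (x^2 - ((j:ℝ) - 1/2)^2)
      = ∏ j ∈ P, (-1) * (((j:ℝ) - 1/2)^2 - x^2) := by
        refine Finset.prod_congr rfl fun j _ => by ring
    _ = (-1:ℝ)^P.card * ∏ j ∈ P, (((j:ℝ) - 1/2)^2 - x^2) := by
        rw [Finset.prod_mul_distrib, Finset.prod_const]
    _ = _ := by rw [hc]

lemma aux_pin (n : ℕ) (x : ℝ) :
    PiN n x = (-1:ℝ)^n * ∏ j ∈ Finset.Icc 1 n, (((j:ℝ) - 1/2)^2 - x^2) := by
  unfold PiN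
  calc ∏ j ∈ Finset.Icc 1 n, (x^2 - ((j:ℝ) - 1/2)^2)
      = ∏ j ∈ Finset.Icc 1 n, (-1) * (((j:ℝ) - 1/2)^2 - x^2) := by
        refine Finset.prod_congr rfl fun j _ => by ring
    _ = (-1:ℝ)^(Finset.Icc 1 n).card * ∏ j ∈ Finset.Icc 1 n, (((j:ℝ) - 1/2)^2 - x^2) := by
        rw [Finset.prod_mul_distrib, Finset.prod_const]
    _ = _ := by rw [Nat.card_Icc]; norm_num

set_option maxHeartbeats 1600000 in
theorem stmt0 (n : ℕ) (hn : 2 ≤ n) (x : ℝ) (hx : x ∈ Set.Ioo (-(1 / 2) : ℝ) (1 / 2)) :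
    -4 * ((PiN n x) ^ 2 - (PiN0 n) ^ 2) * (PiN n x) ^ 2 * Sig n ((n : ℤ) - 1) x *
        Sig n ((n : ℤ) - 2) x
      + 8 * x ^ 2 * (PiN0 n) ^ 2 * PiN n x * (Sig n ((n : ℤ) - 1) x) ^ 2 *
        Sig n ((n : ℤ) - 2) x ≥ 0 := by
  obtain ⟨m, rfl⟩ : ∃ m, n = m + 2 := ⟨n - 2, by omega⟩
  obtain ⟨hx1, hx2⟩ := hx
  have hx4 : x^2 < 1/4 := by nlinarith
  set s : Finset ℕ := Finset.Icc 1 (m + 2) with hs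
  set b : ℕ → ℝ := fun j => ((j:ℝ) - 1/2)^2 - x^2 with hb
  set q : ℕ → ℝ := fun j => ((j:ℝ) - 1/2)^2 with hq
  -- basic per-element facts
  have hbq : ∀ j ∈ s, 0 < b j ∧ b j ≤ q j ∧ (1:ℝ)/4 ≤ q j := by
    intro j hj
    have hj1 : 1 ≤ j := (Finset.mem_Icc.mp hj).1
    have hj1' : (1:ℝ) ≤ (j:ℝ) := by exact_mod_cast hj1
    have hqj : (1:ℝ)/4 ≤ q j := by
      simp only [hq]; nlinarith
    refine ⟨by simp only [hb]; nlinarith, by simp only [hb, hq]; nlinarith, hqj⟩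
  have hb0 : ∀ j ∈ s, 0 ≤ b j := fun j hj => (hbq j hj).1.le
  have hq0 : ∀ j ∈ s, 0 ≤ q j := fun j hj => le_trans (by norm_num) (hbq j hj).2.2
  set P : ℝ := ∏ j ∈ s, b j with hP
  set Q : ℝ := ∏ j ∈ s, q j with hQ
  set S1 : ℝ := ∑ T ∈ s.powersetCard (m + 1), ∏ j ∈ T, b j with hS1
  set S2 : ℝ := ∑ T ∈ s.powersetCard m, ∏ j ∈ T, b j with hS2
  have hPnn : 0 ≤ P := Finset.prod_nonneg hb0
  have hsubnn : ∀ i : ℕ, (0:ℝ) ≤ ∑ T ∈ s.powersetCard i, ∏ j ∈ T, b j := by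
    intro i
    refine Finset.sum_nonneg fun T hT => Finset.prod_nonneg fun j hj => ?_
    exact hb0 j ((Finset.mem_powersetCard.mp hT).1 hj)
  have hS1nn : 0 ≤ S1 := hsubnn (m+1)
  have hS2nn : 0 ≤ S2 := hsubnn m
  -- rewrite Sig/PiN
  have hcast1 : ((m + 2 : ℕ) : ℤ) - 1 = ((m + 1 : ℕ) : ℤ) := by push_cast; ring
  have hcast2 : ((m + 2 : ℕ) : ℤ) - 2 = ((m : ℕ) : ℤ) := by push_cast; ring
  have hSig1 : Sig (m+2) (((m+2:ℕ) : ℤ) - 1) x = (-1:ℝ)^(m+1) * S1 := by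
    rw [hcast1, aux_sig]
  have hSig2 : Sig (m+2) (((m+2:ℕ) : ℤ) - 2) x = (-1:ℝ)^m * S2 := by
    rw [hcast2, aux_sig]
  have hPiN : PiN (m+2) x = (-1:ℝ)^(m+2) * P := aux_pin (m+2) x
  have hPiN0 : PiN0 (m+2) = Q := rfl
  -- the key inequality: (Q² - P²)·P ≤ 2x²Q²·S1
  have hScard : s.card = m + 2 := by rw [hs, Nat.card_Icc]; omega
  -- S1 ≥ sum over erased singletons
  have hT : ∑ k ∈ s, ∏ j ∈ s.erase k, b j ≤ S1 := by
    have hinj : ∀ k ∈ s, ∀ k' ∈ s, s.erase k = s.erase k' → k = k' := by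
      intro k hk k' hk' h
      by_contra hne
      have : k ∈ s.erase k' := Finset.mem_erase.mpr ⟨hne, hk⟩
      rw [← h] at this
      exact absurd rfl (Finset.mem_erase.mp this).1
    have himg : ∑ k ∈ s, ∏ j ∈ s.erase k, b j
        = ∑ T ∈ s.image (fun k => s.erase k), ∏ j ∈ T, b j := (Finset.sum_image (f := fun T => ∏ j ∈ T, b j) hinj).symm
    rw [himg]
    refine Finset.sum_le_sum_of_subset_of_nonneg ?_ ?_
    · intro T hT
      obtain ⟨k, hk, rfl⟩ := Finset.mem_image.mp hT
      refine Finset.mem_powersetCard.mpr ⟨Finset.erase_subset _ _, ?_⟩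
      rw [Finset.card_erase_of_mem hk, hScard]
      omega
    · intro T hT _
      exact Finset.prod_nonneg fun j hj =>
        hb0 j ((Finset.mem_powersetCard.mp hT).1 hj)
  have hkey : (Q^2 - P^2) * P ≤ 2 * x^2 * Q^2 * S1 := by
    have hdiff : Q^2 - P^2 ≤ ∑ k ∈ s, (q k ^ 2 - b k ^ 2) * ∏ j ∈ s.erase k, (q j)^2 := by
      have := aux_prod_sub_prod_le s (fun j => b j ^ 2) (fun j => q j ^ 2)
        (fun j hj => sq_nonneg _) (fun j hj => by
          have h := hbq j hj
          exact pow_le_pow_left₀ h.1.le h.2.1 2)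
      calc Q^2 - P^2 = ∏ j ∈ s, (q j)^2 - ∏ j ∈ s, (b j)^2 := by
            rw [hP, hQ, ← Finset.prod_pow, ← Finset.prod_pow]
        _ ≤ _ := this
    have hterm : ∀ k ∈ s, (q k ^ 2 - b k ^ 2) * (∏ j ∈ s.erase k, (q j)^2) * P
        ≤ 2 * x^2 * Q^2 * ∏ j ∈ s.erase k, b j := by
      intro k hk
      obtain ⟨hbk, hbqk, hqk⟩ := hbq k hk
      have hPk : P = b k * ∏ j ∈ s.erase k, b j := (Finset.mul_prod_erase s b hk).symm
      have hQk : Q = q k * ∏ j ∈ s.erase k, q j := (Finset.mul_prod_erase s q hk).symm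
      have hqb : q k - b k = x^2 := by simp only [hb, hq]; ring
      have hEb : (0:ℝ) ≤ ∏ j ∈ s.erase k, b j :=
        Finset.prod_nonneg fun j hj => hb0 j (Finset.mem_of_mem_erase hj)
      have hEq2 : ∏ j ∈ s.erase k, (q j)^2 = (∏ j ∈ s.erase k, q j)^2 :=
        (Finset.prod_pow _ _ _)
      rw [hPk, hQk, hEq2]
      have hEq0 : (0:ℝ) ≤ ∏ j ∈ s.erase k, q j :=
        Finset.prod_nonneg fun j hj => hq0 j (Finset.mem_of_mem_erase hj)
      -- reduces to (q+b)·b ≤ 2q² after cancelling x²·(∏q)²·(∏b)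
      have hfac : (q k + b k) * b k ≤ 2 * q k ^ 2 := by nlinarith
      have hx20 : (0:ℝ) ≤ x^2 := sq_nonneg x
      calc (q k ^ 2 - b k ^ 2) * (∏ j ∈ s.erase k, q j)^2 * (b k * ∏ j ∈ s.erase k, b j)
          = (x^2 * ((q k + b k) * b k)) * ((∏ j ∈ s.erase k, q j)^2 * ∏ j ∈ s.erase k, b j) := by
            linear_combination ((q k + b k) * (b k * ((∏ j ∈ s.erase k, q j)^2 * ∏ j ∈ s.erase k, b j))) * hqb
        _ ≤ (x^2 * (2 * q k ^2)) * ((∏ j ∈ s.erase k, q j)^2 * ∏ j ∈ s.erase k, b j) := by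
            apply mul_le_mul_of_nonneg_right _ (by positivity)
            exact mul_le_mul_of_nonneg_left hfac hx20
        _ = 2 * x^2 * (q k * ∏ j ∈ s.erase k, q j)^2 * ∏ j ∈ s.erase k, b j := by ring
    calc (Q^2 - P^2) * P
        ≤ (∑ k ∈ s, (q k ^ 2 - b k ^ 2) * ∏ j ∈ s.erase k, (q j)^2) * P := by
          exact mul_le_mul_of_nonneg_right hdiff hPnn
      _ = ∑ k ∈ s, (q k ^ 2 - b k ^ 2) * (∏ j ∈ s.erase k, (q j)^2) * P := by
          rw [Finset.sum_mul]
      _ ≤ ∑ k ∈ s, 2 * x^2 * Q^2 * ∏ j ∈ s.erase k, b j := Finset.sum_le_sum hterm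
      _ = 2 * x^2 * Q^2 * ∑ k ∈ s, ∏ j ∈ s.erase k, b j := by rw [Finset.mul_sum]
      _ ≤ 2 * x^2 * Q^2 * S1 := by
          apply mul_le_mul_of_nonneg_left hT (by positivity)
  -- assemble
  rw [hSig1, hSig2, hPiN, hPiN0]
  have hfinal : 0 ≤ 4 * (P * S1 * S2) * (2 * x^2 * Q^2 * S1 - (Q^2 - P^2) * P) := by
    apply mul_nonneg (by positivity)
    linarith
  rcases Nat.even_or_odd m with hm | hm
  · rw [hm.neg_one_pow, (hm.add_one).neg_one_pow, (by omega : m + 2 = (m+1)+1),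
      ((hm.add_one).add_one).neg_one_pow]
    nlinarith [hfinal]
  · rw [hm.neg_one_pow, (hm.add_one).neg_one_pow, (by omega : m + 2 = (m+1)+1),
      ((hm.add_one).add_one).neg_one_pow]
    nlinarith [hfinal]
end

section
/- Let n ≥ 2 be an integer. For all real x with −1/2 < x < 1/2, one has 8(Π_n(x)² − Π_{n,0}²)·Π_n(x)²·Σ_{n−1}(x)·Σ_{n−3}(x) − 16(Π_n(x)² − Π_{n,0}²)·Π_n(x)²·Σ_{n−2}(x)² ≥ 0. -/
open Finset

/-!
Put `y_j = (j - 1/2)² - x²`, which is positive for `|x| < 1/2`. Up to sign, `Σ_{n-k}(x)` is the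
elementary symmetric function `e_{n-k}(y) = (∏ y_j) · e_k(1/y)`, so the `Σ`-part of the inequality
is the bound `e_1 e_3 ≤ 2 e_2²` for the nonnegative numbers `1/y_j`; this follows by induction on
the number of variables. The factor `Π_{n,0}² - Π_n(x)²` is nonnegative since
`|x² - c| ≤ c` for each factor `c = (k - 1/2)² ≥ 1/4`.
-/

namespace Multiset

section CommSemiring

variable {R : Type*} [CommSemiring R]

theorem esymm_cons_succ (a : R) (s : Multiset R) (k : ℕ) :
    (a ::ₘ s).esymm (k + 1) = a * s.esymm k + s.esymm (k + 1) := by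
  simp only [esymm, powersetCard_cons, map_add, sum_add, map_map, Function.comp_def, prod_cons,
    sum_map_mul_left]
  ring

theorem esymm_zero (s : Multiset R) : s.esymm 0 = 1 := by
  simp [esymm, powersetCard_zero_left]

theorem esymm_card (s : Multiset R) : s.esymm (card s) = s.prod := by
  simp [esymm, powersetCard_self]

theorem esymm_eq_zero_of_card_lt {s : Multiset R} {k : ℕ} (h : card s < k) :
    s.esymm k = 0 := by
  simp [esymm, powersetCard_eq_empty _ h]

theorem esymm_nonneg [PartialOrder R] [IsOrderedRing R] {s : Multiset R}
    (hs : ∀ a ∈ s, 0 ≤ a) (k : ℕ) : 0 ≤ s.esymm k :=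
  sum_nonneg fun _ ht => by
    obtain ⟨t, htk, rfl⟩ := mem_map.1 ht
    exact prod_nonneg fun a ha => hs a (mem_of_le (mem_powersetCard.1 htk).1 ha)

end CommSemiring

/-- The first two inequalities are what carries the third through the induction. -/
theorem esymm_low_degree_ineqs {R : Type*} [CommRing R] [LinearOrder R] [IsStrictOrderedRing R]
    {s : Multiset R} (hs : ∀ a ∈ s, 0 ≤ a) :
    2 * s.esymm 2 ≤ s.esymm 1 ^ 2 ∧ 3 * s.esymm 3 ≤ s.esymm 1 * s.esymm 2 ∧
      s.esymm 1 * s.esymm 3 ≤ 2 * s.esymm 2 ^ 2 := by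
  induction s using Multiset.induction_on with
  | empty =>
    have h (k : ℕ) : (0 : Multiset R).esymm (k + 1) = 0 := esymm_eq_zero_of_card_lt (by simp)
    simp [h]
  | cons a s ih =>
    have ha : 0 ≤ a := hs a (mem_cons_self a s)
    have hs' : ∀ b ∈ s, 0 ≤ b := fun b hb => hs b (mem_cons_of_mem hb)
    obtain ⟨h12, h123, h13⟩ := ih hs'
    have e1 := esymm_nonneg hs' 1
    have e2 := esymm_nonneg hs' 2
    have e3 := esymm_nonneg hs' 3
    rw [esymm_cons_succ a s 0, esymm_cons_succ a s 1, esymm_cons_succ a s 2, esymm_zero,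
      zero_add]
    refine ⟨?_, ?_, ?_⟩
    · nlinarith [mul_nonneg ha e1]
    · nlinarith [mul_le_mul_of_nonneg_left h12 ha, mul_nonneg (mul_nonneg ha ha) e1,
        mul_nonneg ha e2]
    · nlinarith [mul_le_mul_of_nonneg_left h12 (mul_nonneg ha ha),
        mul_le_mul_of_nonneg_left h123 ha, sq_nonneg (s.esymm 1), mul_nonneg ha e3]

theorem esymm_card_sub {K : Type*} [Field K] {s : Multiset K} (hs : ∀ a ∈ s, a ≠ 0) {k : ℕ}
    (hk : k ≤ card s) : s.esymm (card s - k) = s.prod * (s.map (·⁻¹)).esymm k := by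
  induction s using Multiset.induction_on generalizing k with
  | empty => simp_all [esymm_zero]
  | cons a s ih =>
    have ha : a ≠ 0 := hs a (mem_cons_self a s)
    have hs' : ∀ b ∈ s, b ≠ 0 := fun b hb => hs b (mem_cons_of_mem hb)
    rcases k with _ | j
    · rw [Nat.sub_zero, esymm_card, esymm_zero, mul_one]
    rw [card_cons, Nat.add_sub_add_right, map_cons, esymm_cons_succ, prod_cons]
    rw [card_cons] at hk
    rcases Nat.lt_or_ge j (card s) with hj | hj
    · rw [show card s - j = card s - (j + 1) + 1 by omega, esymm_cons_succ, ih hs' hj,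
        ← show card s - j = card s - (j + 1) + 1 by omega, ih hs' hj.le]
      field_simp
      ring
    · obtain rfl : j = card s := by omega
      have hP : s.prod ≠ 0 := prod_ne_zero fun h => hs' 0 h rfl
      have hs_inv : card (s.map (·⁻¹)) = card s := card_map _ _
      rw [Nat.sub_self, esymm_zero, esymm_eq_zero_of_card_lt (k := card s + 1) (by omega),
        ← hs_inv, esymm_card, prod_map_inv, map_id', add_zero]
      field_simp

theorem esymm_card_sub_one_mul_esymm_card_sub_three_le {K : Type*} [Field K] [LinearOrder K]
    [IsStrictOrderedRing K] {s : Multiset K} (hs : ∀ a ∈ s, 0 < a) (h3 : 3 ≤ card s) :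
    s.esymm (card s - 1) * s.esymm (card s - 3) ≤ 2 * s.esymm (card s - 2) ^ 2 := by
  have hs0 : ∀ a ∈ s, a ≠ 0 := fun a ha => (hs a ha).ne'
  have hinv : ∀ a ∈ s.map (·⁻¹), 0 ≤ a := by
    simp only [mem_map, forall_exists_index, and_imp, forall_apply_eq_imp_iff₂]
    exact fun a ha => (inv_pos.2 (hs a ha)).le
  obtain ⟨-, -, h13⟩ := esymm_low_degree_ineqs hinv
  rw [esymm_card_sub hs0 (by omega), esymm_card_sub hs0 h3, esymm_card_sub hs0 (by omega)]
  nlinarith [mul_le_mul_of_nonneg_left h13 (sq_nonneg s.prod)]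

end Multiset

noncomputable def sqGaps (n : ℕ) (x : ℝ) : Multiset ℝ :=
  (Finset.Icc 1 n).val.map fun j : ℕ => ((j : ℝ) - 1 / 2) ^ 2 - x ^ 2

theorem card_sqGaps (n : ℕ) (x : ℝ) : Multiset.card (sqGaps n x) = n := by
  simp [sqGaps]

theorem sqGaps_pos {n : ℕ} {x : ℝ} (hx : x ^ 2 < 1 / 4) : ∀ a ∈ sqGaps n x, 0 < a := by
  simp only [sqGaps, Multiset.mem_map, Finset.mem_val, Finset.mem_Icc]
  rintro _ ⟨j, ⟨hj, -⟩, rfl⟩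
  have : (1 : ℝ) ≤ j := by exact_mod_cast hj
  nlinarith

theorem Sig_natCast (n k : ℕ) (x : ℝ) : Sig n k x = (-1) ^ k * (sqGaps n x).esymm k := by
  rw [Sig, if_pos (Int.natCast_nonneg k), Int.toNat_natCast, ← Finset.esymm_map_val,
    ← Multiset.esymm_neg, sqGaps, Multiset.map_map]
  congr 2
  ext j
  simp

theorem Sig_sub_one_mul_Sig_sub_three_le {n : ℕ} (hn : 2 ≤ n) {x : ℝ} (hx : x ^ 2 < 1 / 4) :
    Sig n ((n : ℤ) - 1) x * Sig n ((n : ℤ) - 3) x ≤ 2 * Sig n ((n : ℤ) - 2) x ^ 2 := by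
  rcases Nat.lt_or_ge n 3 with hn3 | hn3
  · have hSig3 : Sig n ((n : ℤ) - 3) x = 0 := by rw [Sig, if_neg (by omega)]
    rw [hSig3, mul_zero]
    positivity
  have h1 : (n : ℤ) - 1 = ((n - 1 : ℕ) : ℤ) := by omega
  have h2 : (n : ℤ) - 2 = ((n - 2 : ℕ) : ℤ) := by omega
  have h3 : (n : ℤ) - 3 = ((n - 3 : ℕ) : ℤ) := by omega
  have hsign : (-1 : ℝ) ^ (n - 1) * (-1) ^ (n - 3) = ((-1) ^ (n - 2)) ^ 2 := by
    rw [← pow_add, ← pow_mul]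
    congr 1
    omega
  have key := Multiset.esymm_card_sub_one_mul_esymm_card_sub_three_le (sqGaps_pos (n := n) hx)
    (by rwa [card_sqGaps])
  rw [card_sqGaps] at key
  rw [h1, h2, h3, Sig_natCast, Sig_natCast, Sig_natCast]
  calc (-1) ^ (n - 1) * (sqGaps n x).esymm (n - 1) * ((-1) ^ (n - 3) * (sqGaps n x).esymm (n - 3))
      = ((-1) ^ (n - 2)) ^ 2 * ((sqGaps n x).esymm (n - 1) * (sqGaps n x).esymm (n - 3)) := by
        rw [← hsign]; ring
    _ ≤ ((-1) ^ (n - 2)) ^ 2 * (2 * (sqGaps n x).esymm (n - 2) ^ 2) :=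
        mul_le_mul_of_nonneg_left key (sq_nonneg _)
    _ = 2 * ((-1) ^ (n - 2) * (sqGaps n x).esymm (n - 2)) ^ 2 := by ring

theorem PiN_sq_le_PiN0_sq (n : ℕ) {x : ℝ} (hx : x ^ 2 ≤ 1 / 2) :
    PiN n x ^ 2 ≤ PiN0 n ^ 2 := by
  rw [PiN, PiN0, ← Finset.prod_pow, ← Finset.prod_pow]
  refine Finset.prod_le_prod (fun _ _ => sq_nonneg _) fun j hj => ?_
  have hj1 : (1 : ℝ) ≤ j := by exact_mod_cast (Finset.mem_Icc.1 hj).1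
  have hc : x ^ 2 ≤ 2 * ((j : ℝ) - 1 / 2) ^ 2 := by nlinarith
  nlinarith [mul_nonneg (sq_nonneg x) (sub_nonneg.2 hc)]

theorem stmt1 (n : ℕ) (hn : 2 ≤ n) (x : ℝ) (hx : x ∈ Set.Ioo (-(1 / 2) : ℝ) (1 / 2)) :
    8 * ((PiN n x) ^ 2 - (PiN0 n) ^ 2) * (PiN n x) ^ 2 * Sig n ((n : ℤ) - 1) x *
        Sig n ((n : ℤ) - 3) x
      - 16 * ((PiN n x) ^ 2 - (PiN0 n) ^ 2) * (PiN n x) ^ 2 *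
        (Sig n ((n : ℤ) - 2) x) ^ 2 ≥ 0 := by
  have hx2 : x ^ 2 < 1 / 4 := by nlinarith [hx.1, hx.2]
  have hPi := PiN_sq_le_PiN0_sq n (x := x) (by linarith)
  have hSig := Sig_sub_one_mul_Sig_sub_three_le hn hx2
  have hfactor : 0 ≤ 8 * (PiN0 n ^ 2 - PiN n x ^ 2) * PiN n x ^ 2 *
      (2 * Sig n ((n : ℤ) - 2) x ^ 2 - Sig n ((n : ℤ) - 1) x * Sig n ((n : ℤ) - 3) x) := by
    have := sub_nonneg.2 hPi
    have := sub_nonneg.2 hSig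
    positivity
  linarith
end

section
/- Let n ≥ 2 be an integer. For all real x with −1/2 < x < 1/2, one has −(Π_n(x)² − Π_{n,0}²) ≥ 2x²·Π_{n,0}²·Σ_{k=1}^n (k−1/2)^{−2} − x⁴·Π_{n,0}²·( Σ_{k=1}^n (k−1/2)^{−4} + 4·Σ_{k=1}^{n−1} Σ_{j=k+1}^{n} (k−1/2)^{−2}(j−1/2)^{−2} ). -/
open Finset

/-!
Put `u_k = x² / (k − 1/2)²`, so that `Π_n(x)² = Π_{n,0}² ∏_k (1 − u_k)²` and `0 ≤ u_k < 1`.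
With `v_k = 1 − (1 − u_k)² = 2u_k − u_k² ∈ [0, 1]`, the second Bonferroni inequality
`∏ (1 − v_k) ≤ 1 − ∑ v_k + ∑_{k<j} v_k v_j` together with `v_k ≤ 2u_k` gives
`1 − ∏ (1 − u_k)² ≥ 2∑ u_k − ∑ u_k² − 4∑_{k<j} u_k u_j`, which is the claim after
multiplying by `Π_{n,0}²`.
-/

section PairSum

variable {R : Type*} [CommRing R]

/-- `∑_{1 ≤ k < j ≤ n} v_k v_j`, indexed as in the statement. -/
def pairSum (v : ℕ → R) (n : ℕ) : R :=
  ∑ k ∈ Icc 1 (n - 1), ∑ j ∈ Icc (k + 1) n, v k * v j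

lemma pairSum_succ (v : ℕ → R) (n : ℕ) :
    pairSum v (n + 1) = pairSum v n + (∑ k ∈ Icc 1 n, v k) * v (n + 1) := by
  have top_empty : ∑ k ∈ Icc 1 n, ∑ j ∈ Icc (k + 1) n, v k * v j = pairSum v n := by
    cases n with
    | zero => simp [pairSum]
    | succ m => simp [pairSum, sum_Icc_succ_top]
  have split_inner : ∀ k ∈ Icc 1 n, ∑ j ∈ Icc (k + 1) (n + 1), v k * v j
      = ∑ j ∈ Icc (k + 1) n, v k * v j + v k * v (n + 1) := fun k hk =>
    sum_Icc_succ_top (by simp only [mem_Icc] at hk; omega) _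
  rw [pairSum, Nat.add_sub_cancel, sum_congr rfl split_inner, sum_add_distrib, top_empty,
    sum_mul]

lemma pairSum_const_mul (c : R) (v : ℕ → R) (n : ℕ) :
    pairSum (fun k => c * v k) n = c ^ 2 * pairSum v n := by
  simp only [pairSum, mul_sum]
  exact sum_congr rfl fun _ _ => sum_congr rfl fun _ _ => by ring

variable [LinearOrder R] [IsStrictOrderedRing R]

lemma pairSum_mono {v w : ℕ → R} (hv : ∀ k, 0 ≤ v k) (hvw : ∀ k, v k ≤ w k) (n : ℕ) :
    pairSum v n ≤ pairSum w n :=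
  sum_le_sum fun k _ => sum_le_sum fun j _ =>
    mul_le_mul (hvw k) (hvw j) (hv j) ((hv k).trans (hvw k))

lemma prod_one_sub_le_one_sub_sum_add_pairSum {v : ℕ → R} (hv₀ : ∀ k, 0 ≤ v k)
    (hv₁ : ∀ k, v k ≤ 1) (n : ℕ) :
    ∏ k ∈ Icc 1 n, (1 - v k) ≤ 1 - ∑ k ∈ Icc 1 n, v k + pairSum v n := by
  induction n with
  | zero => simp [pairSum]
  | succ n ih =>
    rw [prod_Icc_succ_top (by omega), sum_Icc_succ_top (by omega), pairSum_succ]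
    have hpair : 0 ≤ pairSum v n * v (n + 1) :=
      mul_nonneg (sum_nonneg fun _ _ => sum_nonneg fun _ _ => mul_nonneg (hv₀ _) (hv₀ _))
        (hv₀ _)
    nlinarith [mul_le_mul_of_nonneg_right ih (sub_nonneg.2 (hv₁ (n + 1)))]

lemma two_mul_sum_sub_sum_sq_sub_pairSum_le {u : ℕ → R} (hu₀ : ∀ k, 0 ≤ u k)
    (hu₂ : ∀ k, u k ≤ 2) (n : ℕ) :
    2 * ∑ k ∈ Icc 1 n, u k - ∑ k ∈ Icc 1 n, u k ^ 2 - 4 * pairSum u n ≤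
      1 - ∏ k ∈ Icc 1 n, (1 - u k) ^ 2 := by
  set v : ℕ → R := fun k => 1 - (1 - u k) ^ 2
  have hv₀ : ∀ k, 0 ≤ v k := fun k => by nlinarith [hu₀ k, hu₂ k]
  have hv₁ : ∀ k, v k ≤ 1 := fun k => by simp only [v]; nlinarith [sq_nonneg (1 - u k)]
  have hv_le : pairSum v n ≤ 4 * pairSum u n := by
    have h := pairSum_mono hv₀ (w := fun k => 2 * u k) (fun k => by nlinarith [sq_nonneg (u k)]) n
    rwa [pairSum_const_mul, show (2 : R) ^ 2 = 4 by norm_num] at h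
  have hsum : ∑ k ∈ Icc 1 n, v k = 2 * ∑ k ∈ Icc 1 n, u k - ∑ k ∈ Icc 1 n, u k ^ 2 := by
    rw [mul_sum, ← sum_sub_distrib]
    exact sum_congr rfl fun _ _ => by ring
  have hbonf := prod_one_sub_le_one_sub_sum_add_pairSum hv₀ hv₁ n
  simp only [v, sub_sub_cancel] at hbonf
  linarith

end PairSum

lemma quarter_le_sq_natCast_sub_half (k : ℕ) : (1 / 4 : ℝ) ≤ ((k : ℝ) - 1 / 2) ^ 2 := by
  rcases Nat.eq_zero_or_pos k with rfl | hk
  · norm_num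
  · have : (1 : ℝ) ≤ k := by exact_mod_cast hk
    nlinarith

lemma PiN_sq (n : ℕ) (x : ℝ) :
    PiN n x ^ 2 = PiN0 n ^ 2 * ∏ k ∈ Icc 1 n, (1 - x ^ 2 * (((k : ℝ) - 1 / 2) ^ 2)⁻¹) ^ 2 := by
  rw [PiN, PiN0, ← prod_pow, ← prod_pow, ← prod_mul_distrib]
  refine prod_congr rfl fun k _ => ?_
  have hc : ((k : ℝ) - 1 / 2) ^ 2 ≠ 0 :=
    (lt_of_lt_of_le (by norm_num) (quarter_le_sq_natCast_sub_half k)).ne'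
  have hfactor : ((k : ℝ) - 1 / 2) ^ 2 * (1 - x ^ 2 * (((k : ℝ) - 1 / 2) ^ 2)⁻¹)
      = ((k : ℝ) - 1 / 2) ^ 2 - x ^ 2 := by
    rw [mul_sub, mul_one, mul_comm (x ^ 2), ← mul_assoc, mul_inv_cancel₀ hc, one_mul]
  rw [← mul_pow, hfactor]
  ring

theorem stmt3_general (n : ℕ) (x : ℝ) (hx : x ∈ Set.Ioo (-(1 / 2) : ℝ) (1 / 2)) :
    -((PiN n x) ^ 2 - (PiN0 n) ^ 2) ≥
      2 * x ^ 2 * (PiN0 n) ^ 2 * (∑ k ∈ Finset.Icc 1 n, (((k : ℝ) - 1 / 2) ^ 2)⁻¹)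
        - x ^ 4 * (PiN0 n) ^ 2 *
          ((∑ k ∈ Finset.Icc 1 n, (((k : ℝ) - 1 / 2) ^ 4)⁻¹)
            + 4 * ∑ k ∈ Finset.Icc 1 (n - 1), ∑ j ∈ Finset.Icc (k + 1) n,
                (((k : ℝ) - 1 / 2) ^ 2)⁻¹ * (((j : ℝ) - 1 / 2) ^ 2)⁻¹) := by
  rw [ge_iff_le, PiN_sq]
  set g : ℕ → ℝ := fun k => (((k : ℝ) - 1 / 2) ^ 2)⁻¹
  have hx2 : x ^ 2 < 1 / 4 := by obtain ⟨h₁, h₂⟩ := hx; nlinarith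
  have hu : ∀ k, 0 ≤ x ^ 2 * g k ∧ x ^ 2 * g k ≤ 2 := fun k => by
    have hc := quarter_le_sq_natCast_sub_half k
    refine ⟨by positivity, ?_⟩
    rw [← div_eq_mul_inv, div_le_iff₀ (by linarith)]
    nlinarith [sq_nonneg x]
  have hbound := two_mul_sum_sub_sum_sq_sub_pairSum_le (fun k => (hu k).1) (fun k => (hu k).2) n
  have hpow4 : ∀ k : ℕ, (((k : ℝ) - 1 / 2) ^ 4)⁻¹ = g k ^ 2 := fun k => by
    simp only [g, ← inv_pow, ← pow_mul]
  rw [pairSum_const_mul, ← mul_sum] at hbound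
  simp only [mul_pow, ← mul_sum, ← pow_mul, Nat.reduceMul] at hbound
  rw [sum_congr rfl fun k _ => hpow4 k]
  have hpairSum : ∑ k ∈ Icc 1 (n - 1), ∑ j ∈ Icc (k + 1) n,
      (((k : ℝ) - 1 / 2) ^ 2)⁻¹ * (((j : ℝ) - 1 / 2) ^ 2)⁻¹ = pairSum g n := rfl
  rw [hpairSum]
  linarith [mul_le_mul_of_nonneg_left hbound (sq_nonneg (PiN0 n))]

theorem stmt3 (n : ℕ) (hn : 2 ≤ n) (x : ℝ) (hx : x ∈ Set.Ioo (-(1 / 2) : ℝ) (1 / 2)) :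
    -((PiN n x) ^ 2 - (PiN0 n) ^ 2) ≥
      2 * x ^ 2 * (PiN0 n) ^ 2 * (∑ k ∈ Finset.Icc 1 n, (((k : ℝ) - 1 / 2) ^ 2)⁻¹)
        - x ^ 4 * (PiN0 n) ^ 2 *
          ((∑ k ∈ Finset.Icc 1 n, (((k : ℝ) - 1 / 2) ^ 4)⁻¹)
            + 4 * ∑ k ∈ Finset.Icc 1 (n - 1), ∑ j ∈ Finset.Icc (k + 1) n,
                (((k : ℝ) - 1 / 2) ^ 2)⁻¹ * (((j : ℝ) - 1 / 2) ^ 2)⁻¹) :=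
  stmt3_general n x hx
end

section
/- Let n ≥ 2 be an integer. For all real x with −1/2 < x < 1/2, one has −(Π_n(x)² − Π_{n,0}²)·Π_n(x)²·Σ_{n−1}(x)² + 2x²·Π_{n,0}²·Π_n(x)·Σ_{n−1}(x)³ + 4x⁴·Π_{n,0}²·Σ_{n−1}(x)⁴ ≥ 0. -/
open Finset

lemma key_poly (Q P V : ℝ) (hP : 0 ≤ P) (hV : 0 ≤ V) (hQ : P + V ≤ Q) :
    0 ≤ (Q ^ 2 - P ^ 2) * P ^ 2 - 2 * Q ^ 2 * P * V + 4 * Q ^ 2 * V ^ 2 := by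
  have h1 : 0 ≤ (Q - (P + V)) * (Q + (P + V)) * ((P - V) ^ 2 + 3 * V ^ 2) := by
    apply mul_nonneg (mul_nonneg (by linarith) (by linarith)) (by positivity)
  nlinarith [sq_nonneg (P * V), mul_nonneg (mul_nonneg hP hV) (mul_nonneg hV hV),
    mul_nonneg (mul_nonneg hV hV) (mul_nonneg hV hV)]

theorem stmt4 (n : ℕ) (hn : 2 ≤ n) (x : ℝ) (hx : x ∈ Set.Ioo (-(1 / 2) : ℝ) (1 / 2)) :
    -((PiN n x) ^ 2 - (PiN0 n) ^ 2) * (PiN n x) ^ 2 * (Sig n ((n : ℤ) - 1) x) ^ 2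
      + 2 * x ^ 2 * (PiN0 n) ^ 2 * PiN n x * (Sig n ((n : ℤ) - 1) x) ^ 3
      + 4 * x ^ 4 * (PiN0 n) ^ 2 * (Sig n ((n : ℤ) - 1) x) ^ 4 ≥ 0 := by
  obtain ⟨hx1, hx2⟩ := hx
  obtain ⟨m, rfl⟩ : ∃ m, n = m + 2 := ⟨n - 2, by omega⟩
  set s : Finset ℕ := Finset.Icc 1 (m + 2) with hs
  set b : ℕ → ℝ := fun j => ((j : ℝ) - 1 / 2) ^ 2 - x ^ 2 with hbdef
  have hx4 : x ^ 2 < 1 / 4 := by nlinarith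
  have hb : ∀ j ∈ s, 0 < b j := by
    intro j hj
    rw [hs, mem_Icc] at hj
    have h1 : (1 : ℝ) ≤ (j : ℝ) := by exact_mod_cast hj.1
    simp only [hbdef]
    nlinarith
  have hcard : s.card = m + 2 := by simp [hs]
  set Pp : ℝ := ∏ j ∈ s, b j with hPp
  set Sp : ℝ := ∑ P ∈ s.powersetCard (m + 1), ∏ j ∈ P, b j with hSp
  have hPpPos : 0 < Pp := prod_pos hb
  have hSpNonneg : 0 ≤ Sp :=
    sum_nonneg fun P hP => prod_nonneg fun j hj =>
      (hb j ((mem_powersetCard.mp hP).1 hj)).le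
  -- PiN = (-1)^(m+2) * Pp
  have hPiN : PiN (m + 2) x = (-1) ^ (m + 2) * Pp := by
    unfold PiN
    calc ∏ k ∈ Finset.Icc 1 (m + 2), (x ^ 2 - ((k : ℝ) - 1 / 2) ^ 2)
        = ∏ k ∈ s, ((-1) * b k) := prod_congr rfl (fun k _ => by simp [hbdef])
      _ = (-1) ^ (m + 2) * Pp := by rw [prod_mul_distrib, prod_const, hcard]
  -- Sig = (-1)^(m+1) * Sp
  have hSig : Sig (m + 2) (((m + 2 : ℕ) : ℤ) - 1) x = (-1) ^ (m + 1) * Sp := by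
    unfold Sig
    rw [if_pos (by omega)]
    have ht : (((m + 2 : ℕ) : ℤ) - 1).toNat = m + 1 := by omega
    rw [ht]
    calc ∑ P ∈ s.powersetCard (m + 1), ∏ j ∈ P, (x ^ 2 - ((j : ℝ) - 1 / 2) ^ 2)
        = ∑ P ∈ s.powersetCard (m + 1), (-1) ^ (m + 1) * ∏ j ∈ P, b j := by
          refine sum_congr rfl fun P hP => ?_
          have hPc : P.card = m + 1 := (mem_powersetCard.mp hP).2
          calc ∏ j ∈ P, (x ^ 2 - ((j : ℝ) - 1 / 2) ^ 2)
              = ∏ j ∈ P, ((-1) * b j) := prod_congr rfl (fun j _ => by simp [hbdef])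
            _ = (-1) ^ (m + 1) * ∏ j ∈ P, b j := by rw [prod_mul_distrib, prod_const, hPc]
      _ = (-1) ^ (m + 1) * Sp := by rw [← mul_sum]
  -- key bound : Pp + x^2 * Sp ≤ PiN0
  have hQbound : Pp + x ^ 2 * Sp ≤ PiN0 (m + 2) := by
    have hexp : PiN0 (m + 2)
        = ∑ t ∈ s.powerset, (∏ j ∈ t, b j) * ∏ j ∈ s \ t, x ^ 2 := by
      unfold PiN0
      rw [← prod_add]
      exact prod_congr rfl fun j _ => by simp [hbdef]
    have hnotmem : s ∉ s.powersetCard (m + 1) := by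
      intro h
      have := (mem_powersetCard.mp h).2
      rw [hcard] at this; omega
    have hins : insert s (s.powersetCard (m + 1)) ⊆ s.powerset := by
      intro t ht
      rw [mem_insert] at ht
      rcases ht with rfl | ht
      · exact mem_powerset_self s
      · exact mem_powerset.mpr (mem_powersetCard.mp ht).1
    have hle := sum_le_sum_of_subset_of_nonneg
      (f := fun t => (∏ j ∈ t, b j) * ∏ j ∈ s \ t, x ^ 2) hins (fun t ht _ =>
      mul_nonneg (prod_nonneg fun j hj => (hb j (mem_powerset.mp ht hj)).le)
        (prod_nonneg fun j _ => sq_nonneg x))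
    rw [sum_insert hnotmem] at hle
    have h1 : (∏ j ∈ s, b j) * ∏ j ∈ s \ s, x ^ 2 = Pp := by simp [hPp]
    have h2 : ∑ t ∈ s.powersetCard (m + 1), (∏ j ∈ t, b j) * ∏ j ∈ s \ t, x ^ 2
        = x ^ 2 * Sp := by
      rw [hSp, mul_sum]
      refine sum_congr rfl fun t ht => ?_
      obtain ⟨hts, htc⟩ := mem_powersetCard.mp ht
      rw [prod_const, card_sdiff_of_subset hts, hcard, htc,
        show m + 2 - (m + 1) = 1 from by omega, pow_one, mul_comm]
    rw [h1, h2] at hle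
    rw [hexp]
    linarith
  have hkey := key_poly (PiN0 (m + 2)) Pp (x ^ 2 * Sp) hPpPos.le
    (by positivity) hQbound
  rw [hPiN, hSig]
  have he2 : ((-1 : ℝ) ^ m) ^ 2 = 1 := by
    rw [← pow_mul, mul_comm, pow_mul]; norm_num
  have hA2 : (-1 : ℝ) ^ (m + 2) = (-1) ^ m := by rw [pow_succ, pow_succ]; ring
  have hA1 : (-1 : ℝ) ^ (m + 1) = (-1) ^ m * (-1) := by rw [pow_succ]
  rw [hA2, hA1]
  rcases Nat.even_or_odd m with hpar | hpar
  · rw [hpar.neg_one_pow]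
    nlinarith [mul_nonneg (sq_nonneg Sp) hkey]
  · rw [hpar.neg_one_pow]
    nlinarith [mul_nonneg (sq_nonneg Sp) hkey]
end

section
/- Let n ≥ 2 be an integer. For all real x with −1/2 < x < 1/2: if n is even, then (Π_n(x)² − Π_{n,0}²)·Π_n(x) − 2x²·Π_{n,0}²·Σ_{n−1}(x) ≥ 0, while if n is odd, then (Π_n(x)² − Π_{n,0}²)·Π_n(x) − 2x²·Π_{n,0}²·Σ_{n−1}(x) ≤ 0. -/
open Finset

lemma aux_weier (s : Finset ℕ) (b : ℕ → ℝ) (c : ℝ) (hc : 0 ≤ c) (hb : ∀ k ∈ s, c ≤ b k) :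
    ∏ k ∈ s, b k - ∏ k ∈ s, (b k - c) ≤ c * ∑ k ∈ s, ∏ j ∈ s.erase k, b j := by
  induction s using Finset.induction with
  | empty => simp
  | @insert i s hi ih =>
    have hbi : c ≤ b i := hb i (Finset.mem_insert_self i s)
    have hb' : ∀ k ∈ s, c ≤ b k := fun k hk => hb k (Finset.mem_insert_of_mem hk)
    have ih' := ih hb'
    rw [Finset.prod_insert hi, Finset.prod_insert hi, Finset.sum_insert hi]
    have he1 : (insert i s).erase i = s := Finset.erase_insert hi
    have he2 : ∀ k ∈ s, (insert i s).erase k = insert i (s.erase k) := by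
      intro k hk
      rw [Finset.erase_insert_of_ne]
      rintro rfl; exact hi hk
    rw [he1]
    have hsum : ∑ k ∈ s, ∏ j ∈ (insert i s).erase k, b j
        = b i * ∑ k ∈ s, ∏ j ∈ s.erase k, b j := by
      rw [Finset.mul_sum]
      apply Finset.sum_congr rfl
      intro k hk
      rw [he2 k hk, Finset.prod_insert (fun h => hi (Finset.mem_of_mem_erase h))]
    rw [hsum]
    have hprodle : ∏ k ∈ s, (b k - c) ≤ ∏ k ∈ s, b k := by
      apply Finset.prod_le_prod
      · intro k hk; linarith [hb' k hk]
      · intro k hk; linarith [hc]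
    have hprodnn : 0 ≤ ∏ k ∈ s, (b k - c) := by
      apply Finset.prod_nonneg; intro k hk; linarith [hb' k hk]
    nlinarith [ih']

lemma aux_pows (s : Finset ℕ) (hs : s.Nonempty) (f : ℕ → ℝ) :
    ∑ P ∈ s.powersetCard (s.card - 1), ∏ j ∈ P, f j = ∑ k ∈ s, ∏ j ∈ s.erase k, f j := by
  have himg : s.powersetCard (s.card - 1) = s.image (fun k => s.erase k) := by
    ext P
    simp only [Finset.mem_powersetCard, Finset.mem_image]
    constructor
    · rintro ⟨hPs, hcard⟩
      have hc1 : (s \ P).card = 1 := by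
        rw [Finset.card_sdiff_of_subset hPs, hcard]
        have := Finset.card_pos.mpr hs
        omega
      obtain ⟨k, hk⟩ := Finset.card_eq_one.mp hc1
      have hks : k ∈ s := by
        have : k ∈ s \ P := hk ▸ Finset.mem_singleton_self k
        exact (Finset.mem_sdiff.mp this).1
      refine ⟨k, hks, ?_⟩
      rw [Finset.erase_eq, ← hk, Finset.sdiff_sdiff_eq_self hPs]
    · rintro ⟨k, hk, rfl⟩
      exact ⟨Finset.erase_subset k s, by rw [Finset.card_erase_of_mem hk]⟩
  rw [himg, Finset.sum_image]
  intro k hk k' hk' h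
  exact (Finset.erase_inj s hk).mp h

set_option maxHeartbeats 1600000 in
theorem stmt7 (n : ℕ) (hn : 2 ≤ n) (x : ℝ) (hx : x ∈ Set.Ioo (-(1 / 2) : ℝ) (1 / 2)) :
    (Even n →
      ((PiN n x) ^ 2 - (PiN0 n) ^ 2) * PiN n x
        - 2 * x ^ 2 * (PiN0 n) ^ 2 * Sig n ((n : ℤ) - 1) x ≥ 0) ∧
    (Odd n →
      ((PiN n x) ^ 2 - (PiN0 n) ^ 2) * PiN n x
        - 2 * x ^ 2 * (PiN0 n) ^ 2 * Sig n ((n : ℤ) - 1) x ≤ 0) := by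
  obtain ⟨hx1, hx2⟩ := hx
  have hxsq : x ^ 2 < 1 / 4 := by nlinarith
  have hb : ∀ k ∈ Finset.Icc 1 n, (1 : ℝ) / 4 ≤ ((k : ℝ) - 1 / 2) ^ 2 := by
    intro k hk
    rw [Finset.mem_Icc] at hk
    have h1 : (1 : ℝ) ≤ (k : ℝ) := by exact_mod_cast hk.1
    nlinarith
  set A := ∏ k ∈ Finset.Icc 1 n, (((k : ℝ) - 1 / 2) ^ 2 - x ^ 2) with hA
  set B := ∏ k ∈ Finset.Icc 1 n, ((k : ℝ) - 1 / 2) ^ 2 with hB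
  set T := ∑ k ∈ Finset.Icc 1 n, ∏ j ∈ (Finset.Icc 1 n).erase k,
      (((j : ℝ) - 1 / 2) ^ 2 - x ^ 2) with hT
  set U := ∑ k ∈ Finset.Icc 1 n, ∏ j ∈ (Finset.Icc 1 n).erase k,
      ((j : ℝ) - 1 / 2) ^ 2 with hU
  clear_value A B T U
  have hcard : (Finset.Icc 1 n).card = n := by rw [Nat.card_Icc]; omega
  have hposA : 0 < A := by rw [hA]; exact Finset.prod_pos fun k hk => by have := hb k hk; nlinarith
  have hposB : 0 < B := by rw [hB]; exact Finset.prod_pos fun k hk => by have := hb k hk; nlinarith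
  have hAleB : A ≤ B := by
    rw [hA, hB]
    apply Finset.prod_le_prod
    · intro k hk; have := hb k hk; nlinarith
    · intro k hk; nlinarith [sq_nonneg x]
  have hTnn : 0 ≤ T := by
    rw [hT]
    apply Finset.sum_nonneg; intro k hk
    apply Finset.prod_nonneg; intro j hj
    have := hb j (Finset.mem_of_mem_erase hj); nlinarith
  have hUnn : 0 ≤ U := by
    rw [hU]
    apply Finset.sum_nonneg; intro k hk
    apply Finset.prod_nonneg; intro j hj
    positivity
  have hPiN : PiN n x = (-1) ^ n * A := by
    rw [PiN, hA]
    have h1 : ∀ k ∈ Finset.Icc 1 n,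
        x ^ 2 - ((k : ℝ) - 1 / 2) ^ 2 = (-1) * (((k : ℝ) - 1 / 2) ^ 2 - x ^ 2) := by
      intros; ring
    rw [Finset.prod_congr rfl h1, Finset.prod_mul_distrib, Finset.prod_const, hcard]
  have hPiN0 : PiN0 n = B := by rw [PiN0, hB]
  have hSig : Sig n ((n : ℤ) - 1) x = (-1) ^ (n - 1) * T := by
    rw [Sig, if_pos (by omega : (0 : ℤ) ≤ (n : ℤ) - 1)]
    have h0 : ((n : ℤ) - 1).toNat = (Finset.Icc 1 n).card - 1 := by rw [hcard]; omega
    rw [h0, aux_pows _ (by rw [← Finset.card_pos, hcard]; omega) _]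
    rw [hT, Finset.mul_sum]
    apply Finset.sum_congr rfl
    intro k hk
    have h1 : ∀ j ∈ (Finset.Icc 1 n).erase k,
        x ^ 2 - ((j : ℝ) - 1 / 2) ^ 2 = (-1) * (((j : ℝ) - 1 / 2) ^ 2 - x ^ 2) := by
      intros; ring
    rw [Finset.prod_congr rfl h1, Finset.prod_mul_distrib, Finset.prod_const,
      Finset.card_erase_of_mem hk, hcard]
  have hW : B - A ≤ x ^ 2 * U := by
    rw [hA, hB, hU]
    exact aux_weier (Finset.Icc 1 n) (fun k => ((k : ℝ) - 1 / 2) ^ 2) (x ^ 2)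
      (sq_nonneg x) (fun k hk => le_trans hxsq.le (hb k hk))
  have hUA : U * A ≤ B * T := by
    rw [hU, hT, Finset.sum_mul, Finset.mul_sum]
    apply Finset.sum_le_sum
    intro k hk
    have e1 : (∏ j ∈ (Finset.Icc 1 n).erase k, (((j : ℝ) - 1 / 2) ^ 2 - x ^ 2))
        * (((k : ℝ) - 1 / 2) ^ 2 - x ^ 2) = A := by rw [hA]; exact Finset.prod_erase_mul _ _ hk
    have e2 : (∏ j ∈ (Finset.Icc 1 n).erase k, ((j : ℝ) - 1 / 2) ^ 2)
        * (((k : ℝ) - 1 / 2) ^ 2) = B := by rw [hB]; exact Finset.prod_erase_mul _ _ hk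
    have hPa : 0 ≤ ∏ j ∈ (Finset.Icc 1 n).erase k, (((j : ℝ) - 1 / 2) ^ 2 - x ^ 2) := by
      apply Finset.prod_nonneg; intro j hj
      have := hb j (Finset.mem_of_mem_erase hj); nlinarith
    have hPb : 0 ≤ ∏ j ∈ (Finset.Icc 1 n).erase k, ((j : ℝ) - 1 / 2) ^ 2 := by
      apply Finset.prod_nonneg; intro j hj; positivity
    have hk' : ((k : ℝ) - 1 / 2) ^ 2 - x ^ 2 ≤ ((k : ℝ) - 1 / 2) ^ 2 := by nlinarith [sq_nonneg x]
    nlinarith [mul_nonneg (mul_nonneg hPb hPa) (by nlinarith [sq_nonneg x] : (0:ℝ) ≤ ((k : ℝ) - 1 / 2) ^ 2 - (((k : ℝ) - 1 / 2) ^ 2 - x ^ 2))]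
  have key : (B ^ 2 - A ^ 2) * A ≤ 2 * x ^ 2 * B ^ 2 * T := by
    calc (B ^ 2 - A ^ 2) * A = (B - A) * ((B + A) * A) := by ring
      _ ≤ (x ^ 2 * U) * ((B + A) * A) := by
          apply mul_le_mul_of_nonneg_right hW
          nlinarith
      _ ≤ (x ^ 2 * U) * (2 * B * A) := by
          apply mul_le_mul_of_nonneg_left _ (by nlinarith [sq_nonneg x, mul_nonneg (sq_nonneg x) hUnn] : (0:ℝ) ≤ x ^ 2 * U)
          nlinarith
      _ = 2 * x ^ 2 * B * (U * A) := by ring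
      _ ≤ 2 * x ^ 2 * B * (B * T) := by
          apply mul_le_mul_of_nonneg_left hUA
          nlinarith [sq_nonneg x, mul_nonneg (sq_nonneg x) hposB.le]
      _ = 2 * x ^ 2 * B ^ 2 * T := by ring
  rw [hPiN, hPiN0, hSig]
  constructor
  · intro hev
    have hp : (-1 : ℝ) ^ n = 1 := hev.neg_one_pow
    have hp1 : (-1 : ℝ) ^ (n - 1) = -1 :=
      Odd.neg_one_pow (Nat.Even.sub_odd (by omega) hev odd_one)
    rw [hp, hp1]
    nlinarith [key]
  · intro hodd
    have hp : (-1 : ℝ) ^ n = -1 := hodd.neg_one_pow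
    have hp1 : (-1 : ℝ) ^ (n - 1) = 1 :=
      Even.neg_one_pow (Nat.Odd.sub_odd hodd odd_one)
    rw [hp, hp1]
    nlinarith [key]
end

section
/- Let k ≥ 1 be an integer. For all real x with −1/2 < x < 1/2, one has 2·(k−1/2)^{−2} + 2·(8x² − 1)·( (k−1/2)² − x² )^{−1} − x²·(k−1/2)^{−2}·( 4 + (k−1/2)^{−2} ) ≥ 0. -/
theorem stmt14 (k : ℕ) (hk : 1 ≤ k) (x : ℝ) (hx : x ∈ Set.Ioo (-(1 / 2) : ℝ) (1 / 2)) :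
    2 * (((k : ℝ) - 1 / 2) ^ 2)⁻¹
      + 2 * (8 * x ^ 2 - 1) * (((k : ℝ) - 1 / 2) ^ 2 - x ^ 2)⁻¹
      - x ^ 2 * (((k : ℝ) - 1 / 2) ^ 2)⁻¹ * (4 + (((k : ℝ) - 1 / 2) ^ 2)⁻¹) ≥ 0 := by
  obtain ⟨hx1, hx2⟩ := hx
  have hk1 : (1 : ℝ) ≤ (k : ℝ) := by exact_mod_cast hk
  set a : ℝ := ((k : ℝ) - 1 / 2) ^ 2 with ha_def
  have ha : (1/4 : ℝ) ≤ a := by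
    have : (1/2 : ℝ) ≤ (k : ℝ) - 1/2 := by linarith
    nlinarith
  have ht : x ^ 2 < 1/4 := by nlinarith
  have h0 : (0 : ℝ) ≤ x ^ 2 := sq_nonneg x
  have hapos : 0 < a := by linarith
  have hat : 0 < a - x ^ 2 := by linarith
  have key : 2 * a⁻¹ + 2 * (8 * x ^ 2 - 1) * (a - x ^ 2)⁻¹
      - x ^ 2 * a⁻¹ * (4 + a⁻¹)
      = x ^ 2 * (12 * a ^ 2 - 3 * a + 4 * a * x ^ 2 + x ^ 2) / (a ^ 2 * (a - x ^ 2)) := by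
    field_simp
    ring
  rw [ge_iff_le, key]
  apply div_nonneg
  · nlinarith [mul_nonneg h0 (show (0:ℝ) ≤ 12 * a ^ 2 - 3 * a + 4 * a * x ^ 2 + x ^ 2 by nlinarith)]
  · positivity
end

section
/- Let n ≥ 1 be an integer and define g_n : (−1, 1) → ℝ by g_n(x) = ( 1/2 − x^{2n}/(2(n+1)) ) / (x^{2n} − 1)². Then g_n is strictly convex on the open interval (−1, 1). (Note that for x ≠ 0, g_n(x) = −Ṽ_n(x)/(Ṽ_n'(x))², where Ṽ_n(x) = −x²/2 + x^{2n+2}/(2(n+1)) is the φ^{2n+2} potential and Ṽ_n'(x) = x(x^{2n} − 1); g_n is the smooth extension of this quotient through x = 0.) -/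
/-!
Writing `t = x ^ (2 * n)`, the function is `φ (x ^ (2 * n))` with
`φ t = (1 / 2 - t / (2 * c)) / (t - 1) ^ 2` and `c = n + 1`. On `t < 1` and for `c ≥ 1`,
`φ' t = (t + 1 - 2 * c) / (2 * c * (t - 1) ^ 3) > 0` and
`φ'' t = (3 * c - 2 - t) / (c * (t - 1) ^ 4) > 0`,
so `φ` is increasing and strictly convex there. A convex increasing function of the
strictly convex `x ^ (2 * n)`, which maps `(-1, 1)` below `1`, is strictly convex.
-/

open Set

noncomputable section

def phi (c t : ℝ) : ℝ := (1 / 2 - t / (2 * c)) / (t - 1) ^ 2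

def phiDeriv (c t : ℝ) : ℝ := (t + 1 - 2 * c) / (2 * c * (t - 1) ^ 3)

end

lemma strictMonoOn_Iio_of_hasDerivAt_pos {f f' : ℝ → ℝ} {a : ℝ}
    (hf : ∀ t < a, HasDerivAt f (f' t) t) (hf' : ∀ t < a, 0 < f' t) : StrictMonoOn f (Iio a) := by
  refine strictMonoOn_of_hasDerivWithinAt_pos (f' := f') (convex_Iio a)
    (fun t ht => (hf t ht).continuousAt.continuousWithinAt) ?_ ?_ <;> rw [interior_Iio]
  exacts [fun t ht => (hf t ht).hasDerivWithinAt, hf']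

section Profile

variable {c t : ℝ}

lemma hasDerivAt_phi (hc : c ≠ 0) (ht : t ≠ 1) : HasDerivAt (phi c) (phiDeriv c t) t := by
  have ht1 : t - 1 ≠ 0 := sub_ne_zero.mpr ht
  have hnum : HasDerivAt (fun t : ℝ => 1 / 2 - t / (2 * c)) (-(1 / (2 * c))) t :=
    ((hasDerivAt_id t).div_const (2 * c)).const_sub (1 / 2)
  have hden : HasDerivAt (fun t : ℝ => (t - 1) ^ 2) (2 * (t - 1)) t := by
    simpa using ((hasDerivAt_id t).sub_const 1).fun_pow 2
  refine (hnum.fun_div hden (pow_ne_zero 2 ht1)).congr_deriv ?_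
  unfold phiDeriv
  field_simp
  ring

lemma hasDerivAt_phiDeriv (hc : c ≠ 0) (ht : t ≠ 1) :
    HasDerivAt (phiDeriv c) ((3 * c - 2 - t) / (c * (t - 1) ^ 4)) t := by
  have ht1 : t - 1 ≠ 0 := sub_ne_zero.mpr ht
  have hnum : HasDerivAt (fun t : ℝ => t + 1 - 2 * c) 1 t :=
    ((hasDerivAt_id t).add_const 1).sub_const _
  have hden : HasDerivAt (fun t : ℝ => 2 * c * (t - 1) ^ 3) (2 * c * (3 * (t - 1) ^ 2)) t := by
    simpa using (((hasDerivAt_id t).sub_const 1).pow 3).const_mul (2 * c)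
  refine (hnum.fun_div hden (by positivity)).congr_deriv ?_
  field_simp
  ring

lemma strictMonoOn_phi (hc : 1 ≤ c) : StrictMonoOn (phi c) (Iio 1) := by
  have hc0 : c ≠ 0 := by positivity
  refine strictMonoOn_Iio_of_hasDerivAt_pos (fun t ht => hasDerivAt_phi hc0 ht.ne) fun t ht => ?_
  have hcube : (t - 1) ^ 3 < 0 := Odd.pow_neg (by decide) (sub_neg.mpr ht)
  exact div_pos_of_neg_of_neg (by linarith) (mul_neg_of_pos_of_neg (by positivity) hcube)

lemma strictConvexOn_phi (hc : 1 ≤ c) : StrictConvexOn ℝ (Iio 1) (phi c) := by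
  have hc0 : c ≠ 0 := by positivity
  have hφ' : StrictMonoOn (phiDeriv c) (Iio 1) := by
    refine strictMonoOn_Iio_of_hasDerivAt_pos (fun t ht => hasDerivAt_phiDeriv hc0 ht.ne)
      fun t ht => ?_
    have : t - 1 ≠ 0 := sub_ne_zero.mpr ht.ne
    have : 0 < 3 * c - 2 - t := by linarith
    positivity
  refine StrictMonoOn.strictConvexOn_of_deriv (convex_Iio 1)
    (fun t ht => (hasDerivAt_phi hc0 ht.ne).continuousAt.continuousWithinAt) ?_
  rw [interior_Iio]
  exact hφ'.congr fun t ht => ((hasDerivAt_phi hc0 ht.ne).deriv).symm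

end Profile

lemma mapsTo_pow_Ioo_Iio {n : ℕ} (hn : n ≠ 0) :
    MapsTo (fun x : ℝ => x ^ n) (Ioo (-1) 1) (Iio 1) := fun x hx =>
  calc x ^ n ≤ |x| ^ n := abs_pow x n ▸ le_abs_self _
    _ < 1 := pow_lt_one₀ (abs_nonneg x) (abs_lt.mpr ⟨hx.1, hx.2⟩) hn

theorem stmt19 (n : ℕ) (hn : 1 ≤ n) :
    StrictConvexOn ℝ (Set.Ioo (-1 : ℝ) 1)
      (fun x : ℝ => (1 / 2 - x ^ (2 * n) / (2 * ((n : ℝ) + 1))) / (x ^ (2 * n) - 1) ^ 2) := by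
  have h2n : 2 * n ≠ 0 := by omega
  have hc : (1 : ℝ) ≤ n + 1 := by simp
  have hpow : StrictConvexOn ℝ (Ioo (-1) 1) (fun x : ℝ => x ^ (2 * n)) :=
    (Even.strictConvexOn_pow (even_two_mul n) h2n).subset (subset_univ _) (convex_Ioo _ _)
  have himage : (fun x : ℝ => x ^ (2 * n)) '' Ioo (-1) 1 ⊆ Iio 1 :=
    (mapsTo_pow_Ioo_Iio h2n).image_subset
  have himage_convex : Convex ℝ ((fun x : ℝ => x ^ (2 * n)) '' Ioo (-1) 1) :=
    (isPreconnected_Ioo.image _ (by fun_prop)).convex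
  exact ((strictConvexOn_phi hc).convexOn.subset himage himage_convex).comp_strictConvexOn hpow
    ((strictMonoOn_phi hc).mono himage)
end
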